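/- arXiv:1403.4758 — 3 statements merged into one kernel-verified Lean document; each statement's English description precedes it below -/
import Mathlib

section
/- Fix λ = Σ_{i=1}^{n−1} m_i ω_i ∈ P⁺ and let I_odd = {i₁ < ⋯ < i_k} be the set of indices i with m_i odd. Define λ₁^max = Σ_{j=1}^{k} ((m_{i_j} + (−1)^j)/2) ω_{i_j} + Σ_{i ∉ I_odd} (m_i/2) ω_i and λ₂^max = λ − λ₁^max. Then for every positive root α of sl_n, min{λ₁^max(h_α), λ₂^max(h_α)} = ⌊λ(h_α)/2⌋. -/
/-- The first component `λ₁^max` of the maximal two-part partition of a weight with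
fundamental-weight coefficients `m`: at an index `i` with `m i` even it is `m i / 2`;
at the `j`-th odd index `i_j` (in increasing order) it is `(m_{i_j} + (-1)^j)/2`. -/
def lamMax (m : ℕ → ℕ) (i : ℕ) : ℕ :=
  if Odd (m i) then
    (if Odd (((Finset.Icc 1 i).filter fun t => Odd (m t)).card) then
      (m i - 1) / 2 else (m i + 1) / 2)
  else m i / 2

/-!
Let `c k = oddCount m k` count the odd `m t` with `1 ≤ t ≤ k`, and `s k = (-1) ^ c k`. Since the
odd `m t` are rounded up and down alternately, `2 λ₁^max(h_{α_k}) - m_k = (s k - s (k - 1)) / 2`.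
Over a positive root `α_{i,j}` this telescopes to `(s j - s (i - 1)) / 2 ∈ {-1, 0, 1}`, so
`λ₁^max(h_α)` and `λ₂^max(h_α) = λ(h_α) - λ₁^max(h_α)` are `λ(h_α) / 2` rounded in the two
directions.
-/

open Finset

def oddCount (m : ℕ → ℕ) (k : ℕ) : ℕ :=
  #{t ∈ Icc 1 k | Odd (m t)}

lemma oddCount_succ (m : ℕ → ℕ) (k : ℕ) :
    oddCount m (k + 1) = oddCount m k + if Odd (m (k + 1)) then 1 else 0 := by
  simp only [oddCount, card_filter]
  exact sum_Icc_succ_top (by omega) _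

lemma lamMax_le (m : ℕ → ℕ) (k : ℕ) : lamMax m k ≤ m k := by
  unfold lamMax
  split_ifs <;> omega

lemma two_mul_lamMax_sub (m : ℕ → ℕ) (k : ℕ) :
    (2 * lamMax m k - m k : ℤ) = if Odd (m k) then (-1) ^ oddCount m k else 0 := by
  rw [lamMax, ← oddCount]
  split_ifs with hm hc
  · obtain ⟨t, ht⟩ := hm
    rw [hc.neg_one_pow, ht]
    omega
  · obtain ⟨t, ht⟩ := hm
    rw [(Nat.not_odd_iff_even.1 hc).neg_one_pow, ht]
    omega
  · obtain ⟨t, ht⟩ := Nat.not_odd_iff_even.1 hm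
    rw [ht]
    omega

lemma two_mul_lamMax_succ_sub (m : ℕ → ℕ) (k : ℕ) :
    2 * (2 * lamMax m (k + 1) - m (k + 1) : ℤ) =
      (-1) ^ oddCount m (k + 1) - (-1) ^ oddCount m k := by
  rw [two_mul_lamMax_sub, oddCount_succ]
  split_ifs <;> ring

lemma two_mul_sum_two_mul_lamMax_sub {i j : ℕ} (m : ℕ → ℕ) (hi : 1 ≤ i) (hij : i ≤ j) :
    2 * ∑ k ∈ Icc i j, (2 * lamMax m k - m k : ℤ) =
      (-1) ^ oddCount m j - (-1) ^ oddCount m (i - 1) := by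
  rw [mul_sum]
  calc ∑ k ∈ Icc i j, 2 * (2 * lamMax m k - m k : ℤ)
      = ∑ k ∈ Icc i j, ((-1) ^ oddCount m (k + 1 - 1) - (-1) ^ oddCount m (k - 1) : ℤ) := by
        refine sum_congr rfl fun k hk => ?_
        obtain ⟨k, rfl⟩ := Nat.exists_eq_add_of_le' (hi.trans (mem_Icc.1 hk).1)
        simpa using two_mul_lamMax_succ_sub m k
    _ = _ := by
        rw [sum_Icc_sub (f := fun k => ((-1 : ℤ) ^ oddCount m (k - 1))) hij, Nat.add_sub_cancel]

lemma abs_two_mul_sum_lamMax_sub_le {i j : ℕ} (m : ℕ → ℕ) (hi : 1 ≤ i) (hij : i ≤ j) :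
    |2 * ((∑ k ∈ Icc i j, lamMax m k : ℕ) : ℤ) - (∑ k ∈ Icc i j, m k : ℕ)| ≤ 1 := by
  have htel := two_mul_sum_two_mul_lamMax_sub m hi hij
  rw [sum_sub_distrib, ← mul_sum] at htel
  push_cast
  have hbound := abs_sub ((-1 : ℤ) ^ oddCount m j) ((-1) ^ oddCount m (i - 1))
  rw [abs_neg_one_pow, abs_neg_one_pow, ← htel, abs_mul] at hbound
  norm_num at hbound
  linarith

lemma min_tsub_eq_div_two_of_abs_two_mul_sub_le {a s : ℕ} (h : |2 * (a : ℤ) - s| ≤ 1) :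
    min a (s - a) = s / 2 := by
  rw [abs_le] at h
  omega

theorem stmt5_general (m : ℕ → ℕ) (i j : ℕ) (hi : 1 ≤ i) (hij : i ≤ j) :
    min (∑ k ∈ Finset.Icc i j, lamMax m k) (∑ k ∈ Finset.Icc i j, (m k - lamMax m k)) =
      (∑ k ∈ Finset.Icc i j, m k) / 2 := by
  rw [sum_tsub_distrib _ fun k _ => lamMax_le m k]
  exact min_tsub_eq_div_two_of_abs_two_mul_sub_le (abs_two_mul_sum_lamMax_sub_le m hi hij)

/-- with `λ₂^max = λ - λ₁^max`, for every positive root `α_{i,j}` of sl_n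
(`1 ≤ i ≤ j ≤ n-1`), `min{λ₁^max(h_α), λ₂^max(h_α)} = ⌊λ(h_α)/2⌋`,
where `λ(h_{α_{i,j}}) = m_i + ⋯ + m_j`. -/
theorem stmt5 (n : ℕ) (m : ℕ → ℕ) (i j : ℕ) (hi : 1 ≤ i) (hij : i ≤ j) (hj : j ≤ n - 1) :
    min (∑ k ∈ Finset.Icc i j, lamMax m k) (∑ k ∈ Finset.Icc i j, (m k - lamMax m k)) =
      (∑ k ∈ Finset.Icc i j, m k) / 2 :=
  stmt5_general m i j hi hij
end

section
/- With λ₁^max and λ₂^max as defined from λ ∈ P⁺ (the maximal partition of λ into two dominant parts), the pair (λ₁^max, λ₂^max) is a maximum of the poset P(λ,2): for every (μ₁, μ₂) ∈ P⁺ × P⁺ with μ₁ + μ₂ = λ and every positive root α, min{μ₁(h_α), μ₂(h_α)} ≤ min{λ₁^max(h_α), λ₂^max(h_α)}. -/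
open Finset

lemma two_mul_lamMax_add_oddCount_mod_two (m : ℕ → ℕ) (k : ℕ) :
    2 * lamMax m (k + 1) + oddCount m (k + 1) % 2 = m (k + 1) + oddCount m k % 2 := by
  have hcount := oddCount_succ m k
  rw [lamMax, ← oddCount]
  simp only [Nat.odd_iff] at hcount ⊢
  split_ifs at hcount ⊢ <;> omega

lemma two_mul_sum_Ioc_lamMax_add_oddCount_mod_two (m : ℕ → ℕ) {a b : ℕ} (hab : a ≤ b) :
    2 * ∑ k ∈ Ioc a b, lamMax m k + oddCount m b % 2 =
      ∑ k ∈ Ioc a b, m k + oddCount m a % 2 := by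
  induction b, hab using Nat.le_induction with
  | base => simp
  | succ b hab ih =>
    rw [sum_Ioc_succ_top hab, sum_Ioc_succ_top hab]
    have := two_mul_lamMax_add_oddCount_mod_two m b
    omega

lemma min_sum_lamMax_sum_sub_lamMax (m : ℕ → ℕ) {i j : ℕ} (hi : 1 ≤ i) (hij : i ≤ j) :
    min (∑ k ∈ Icc i j, lamMax m k) (∑ k ∈ Icc i j, (m k - lamMax m k)) =
      (∑ k ∈ Icc i j, m k) / 2 := by
  obtain ⟨i, rfl⟩ := Nat.exists_eq_add_of_le' hi
  rw [sum_tsub_distrib _ fun k _ => lamMax_le m k, Icc_add_one_left_eq_Ioc]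
  have := two_mul_sum_Ioc_lamMax_add_oddCount_mod_two m (show i ≤ j by omega)
  omega

/-- The positive root `α_{i,j} = α_i + ⋯ + α_j` pairs with `∑ mₖ ωₖ` to `m_i + ⋯ + m_j`. -/
theorem stmt6_general (m μ₁ μ₂ : ℕ → ℕ) (hsum : ∀ t, μ₁ t + μ₂ t = m t)
    (i j : ℕ) (hi : 1 ≤ i) (hij : i ≤ j) :
    min (∑ k ∈ Finset.Icc i j, μ₁ k) (∑ k ∈ Finset.Icc i j, μ₂ k) ≤
      min (∑ k ∈ Finset.Icc i j, lamMax m k)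
        (∑ k ∈ Finset.Icc i j, (m k - lamMax m k)) := by
  have hμ : ∑ k ∈ Icc i j, μ₁ k + ∑ k ∈ Icc i j, μ₂ k = ∑ k ∈ Icc i j, m k := by
    rw [← sum_add_distrib]
    exact sum_congr rfl fun k _ => hsum k
  rw [min_sum_lamMax_sum_sub_lamMax m hi hij]
  omega

/-- `(λ₁^max, λ₂^max)` is a maximum of the poset `P(λ,2)`: for every
decomposition `μ₁ + μ₂ = λ` into dominant weights and every positive root `α_{i,j}`
(`1 ≤ i ≤ j ≤ n-1`, with `λ(h_{α_{i,j}}) = m_i + ⋯ + m_j`),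
`min{μ₁(h_α), μ₂(h_α)} ≤ min{λ₁^max(h_α), λ₂^max(h_α)}`. -/
theorem stmt6 (n : ℕ) (m μ₁ μ₂ : ℕ → ℕ) (hsum : ∀ t, μ₁ t + μ₂ t = m t)
    (i j : ℕ) (hi : 1 ≤ i) (hij : i ≤ j) (hj : j ≤ n - 1) :
    min (∑ k ∈ Finset.Icc i j, μ₁ k) (∑ k ∈ Finset.Icc i j, μ₂ k) ≤
      min (∑ k ∈ Finset.Icc i j, lamMax m k)
        (∑ k ∈ Finset.Icc i j, (m k - lamMax m k)) :=
  stmt6_general m μ₁ μ₂ hsum i j hi hij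
end

section
/- Pieri rule for one-column shapes in type A: for a dominant weight λ = Σ m_i ω_i of sl_n and j ∈ {1,…,n−1}, the highest weight vectors of V(λ) ⊗ V(ω_j) are parameterized by the set T of strictly increasing tuples 1 ≤ b₁ < b₂ < ⋯ < b_j ≤ n such that whenever b_{i−1} ≠ b_i − 1 (including the case i = 1 with b₀ := 0) one has m_{b_i − 1} ≠ 0; moreover V(λ) ⊗ V(ω_j) ≅ ⊕_{(b₁<⋯<b_j) ∈ T} V(λ + ω_j − Σ_{i=1}^{j}(ω_{b_i} − ω_{b_i − 1}))... equivalently, s_λ · e_j = Σ_τ s_τ over partitions τ obtained from λ by adding a vertical strip of size j. -/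
/-!
Expanding `e_j = Σ_{|S| = j} ∏_{s ∈ S} x_s` and absorbing `∏_{s ∈ S} x_{σ s}` into the term of
each permutation `σ` gives `a_μ · e_j = Σ_{|S| = j} a_{μ + 1_S}`. For `μ = λ + δ` with `λ` a
partition, each row of `λ + 1_S` grows by at most one, so if `λ + 1_S` is not a partition then
`(λ + 1_S)_{i+1} = (λ + 1_S)_i + 1` for some `i`; then `λ + 1_S + δ` has two equal entries and
its alternant vanishes. The surviving `S` are exactly the vertical strips.
-/

open MvPolynomial

/-- The alternant `a_μ = det(x_t^{μ_s}) = Σ_σ sign(σ) Π_t x_{σ t}^{μ t}`. -/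
noncomputable def alternant (n : ℕ) (μ : Fin n → ℕ) : MvPolynomial (Fin n) ℤ :=
  ∑ σ : Equiv.Perm (Fin n),
    (Equiv.Perm.sign σ : ℤ) • ∏ t : Fin n, (X (σ t) : MvPolynomial (Fin n) ℤ) ^ μ t

/-- The staircase `δ = (n-1, n-2, …, 0)`. -/
def staircase (n : ℕ) : Fin n → ℕ := fun t => n - 1 - t

open Finset

lemma alternant_eq_det (n : ℕ) (μ : Fin n → ℕ) :
    alternant n μ = (Matrix.of fun s t : Fin n => (X s : MvPolynomial (Fin n) ℤ) ^ μ t).det := by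
  rw [Matrix.det_apply, alternant]
  refine sum_congr rfl fun σ _ => ?_
  simp [Units.smul_def]

lemma alternant_eq_zero_of_eq {n : ℕ} {μ : Fin n → ℕ} {t t' : Fin n} (h : t ≠ t')
    (he : μ t = μ t') :
    alternant n μ = 0 := by
  rw [alternant_eq_det]
  exact Matrix.det_zero_of_column_eq h (by simp [he])

lemma alternant_add_staircase_eq_zero {m : ℕ} {ν : Fin (m + 1) → ℕ} {i : Fin m}
    (h : ν i.succ = ν i.castSucc + 1) :
    alternant (m + 1) (fun t => ν t + staircase (m + 1) t) = 0 := by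
  refine alternant_eq_zero_of_eq (Fin.castSucc_lt_succ (i := i)).ne ?_
  simp only [staircase, Fin.val_castSucc, Fin.val_succ]
  omega

lemma esymm_eq_sum_prod_perm (n j : ℕ) (σ : Equiv.Perm (Fin n)) :
    esymm (Fin n) ℤ j =
      ∑ S ∈ powersetCard j univ, ∏ t ∈ S, (X (σ t) : MvPolynomial (Fin n) ℤ) := by
  rw [← rename_esymm (Fin n) ℤ j σ, esymm, map_sum]
  simp only [map_prod, rename_X]

lemma prod_X_pow_mul_prod_X {n : ℕ} (σ : Equiv.Perm (Fin n)) (μ : Fin n → ℕ)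
    (S : Finset (Fin n)) :
    (∏ t, (X (σ t) : MvPolynomial (Fin n) ℤ) ^ μ t) * ∏ t ∈ S, X (σ t) =
      ∏ t, X (σ t) ^ (μ t + if t ∈ S then 1 else 0) := by
  simp only [pow_add, pow_ite, pow_one, pow_zero, prod_mul_distrib, prod_ite_mem, univ_inter]

lemma alternant_mul_esymm (n j : ℕ) (μ : Fin n → ℕ) :
    alternant n μ * esymm (Fin n) ℤ j =
      ∑ S ∈ powersetCard j univ, alternant n (fun t => μ t + if t ∈ S then 1 else 0) := by
  unfold alternant
  rw [sum_mul, sum_comm]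
  refine sum_congr rfl fun σ _ => ?_
  rw [smul_mul_assoc, esymm_eq_sum_prod_perm n j σ, mul_sum, smul_sum]
  simp only [prod_X_pow_mul_prod_X]

def addStrip {ι : Type*} [DecidableEq ι] (l : ι → ℕ) (S : Finset ι) : ι → ℕ :=
  fun t => l t + if t ∈ S then 1 else 0

section addStrip

variable {ι : Type*} [DecidableEq ι] {l : ι → ℕ}

lemma addStrip_sub_self (S : Finset ι) (t : ι) :
    addStrip l S t - l t = if t ∈ S then 1 else 0 := by
  simp [addStrip]

lemma le_addStrip (S : Finset ι) (t : ι) : l t ≤ addStrip l S t := Nat.le_add_right _ _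

lemma addStrip_le (S : Finset ι) (t : ι) : addStrip l S t ≤ l t + 1 := by
  unfold addStrip; split_ifs <;> omega

lemma addStrip_eq_add_one_iff {S : Finset ι} {t : ι} : addStrip l S t = l t + 1 ↔ t ∈ S := by
  unfold addStrip; split_ifs <;> simp [*]

variable [Fintype ι]

lemma sum_addStrip_sub_self (S : Finset ι) : ∑ t, (addStrip l S t - l t) = S.card := by
  simp [addStrip_sub_self]

lemma filter_addStrip_eq_add_one (S : Finset ι) :
    univ.filter (fun t => addStrip l S t = l t + 1) = S := by
  ext t; simp [addStrip_eq_add_one_iff]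

lemma addStrip_filter_eq_add_one {ν : ι → ℕ} (hν : ∀ t, l t ≤ ν t ∧ ν t ≤ l t + 1) :
    addStrip l (univ.filter fun t => ν t = l t + 1) = ν := by
  funext t
  have := hν t
  simp only [addStrip, mem_filter, mem_univ, true_and]
  split_ifs <;> omega

end addStrip

lemma alternant_addStrip_eq_zero_of_not_antitone {n : ℕ} {l : Fin n → ℕ} (hl : Antitone l)
    {S : Finset (Fin n)} (hS : ¬Antitone (addStrip l S)) :
    alternant n (fun t => addStrip l S t + staircase n t) = 0 := by
  cases n with
  | zero => exact absurd (fun a => a.elim0) hS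
  | succ m =>
    obtain ⟨i, hi⟩ := not_forall.1 (mt Fin.antitone_iff_succ_le.2 hS)
    refine alternant_add_staircase_eq_zero (i := i) ?_
    have := hl (Fin.castSucc_le_succ i)
    have := addStrip_le (l := l) S i.succ
    have := le_addStrip (l := l) S i.castSucc
    omega

lemma alternant_add_staircase_mul_esymm {n : ℕ} (j : ℕ) {l : Fin n → ℕ} (hl : Antitone l) :
    alternant n (fun t => l t + staircase n t) * esymm (Fin n) ℤ j =
      ∑ S ∈ (powersetCard j univ).filter (fun S => Antitone (addStrip l S)),
        alternant n (fun t => addStrip l S t + staircase n t) := by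
  have hshift : ∀ S : Finset (Fin n), (fun t => l t + staircase n t + if t ∈ S then 1 else 0) =
      fun t => addStrip l S t + staircase n t := fun S => funext fun t => by
    simp only [addStrip]; ring
  simp only [alternant_mul_esymm, hshift]
  exact (sum_filter_of_ne fun S _ =>
    not_imp_comm.1 (alternant_addStrip_eq_zero_of_not_antitone hl)).symm

/-- Via `s_λ = a_{λ+δ} / a_δ`, the Pieri rule `s_λ · e_j = Σ_ν s_ν` becomes an identity of
alternants. -/
theorem stmt12_general (n j : ℕ) (l : Fin n → ℕ) (hl : Antitone l) :
    alternant n (fun t => l t + staircase n t) * MvPolynomial.esymm (Fin n) ℤ j =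
      ∑ ν ∈ (Fintype.piFinset fun t : Fin n => Finset.range (l t + 2)).filter
          (fun ν => (∀ t t' : Fin n, t ≤ t' → ν t' ≤ ν t) ∧
            (∀ t, l t ≤ ν t ∧ ν t ≤ l t + 1) ∧ (∑ t, (ν t - l t)) = j),
        alternant n fun t => ν t + staircase n t := by
  rw [alternant_add_staircase_mul_esymm j hl]
  refine sum_nbij' (addStrip l) (fun ν => univ.filter fun t => ν t = l t + 1) ?_ ?_
    (fun S _ => filter_addStrip_eq_add_one S) ?_ fun _ _ => rfl
  · intro S hS
    simp only [mem_filter, mem_powersetCard_univ] at hS ⊢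
    refine ⟨Fintype.mem_piFinset.2 fun t => mem_range.2 (Nat.lt_succ_of_le (addStrip_le S t)),
      hS.2, fun t => ⟨le_addStrip S t, addStrip_le S t⟩, (sum_addStrip_sub_self S).trans hS.1⟩
  · intro ν hν
    simp only [mem_filter, mem_powersetCard_univ] at hν ⊢
    obtain ⟨-, hanti, hbounds, hsum⟩ := hν
    have hstrip := addStrip_filter_eq_add_one hbounds
    refine ⟨?_, by rw [hstrip]; exact hanti⟩
    rw [← hsum, ← sum_addStrip_sub_self, hstrip]
  · intro ν hν
    simp only [mem_filter] at hν
    exact addStrip_filter_eq_add_one hν.2.2.1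

/-- Pieri rule for one-column shapes, stated for Schur polynomials via
alternants, `s_λ = a_{λ+δ}/a_δ`: for `j ∈ {1,…,n-1}`, `s_λ · e_j` is the
multiplicity-free sum of `s_ν` over partitions `ν` obtained from `λ` by adding a vertical
strip of size `j` (i.e. `ν` a partition, `λ_t ≤ ν_t ≤ λ_t + 1`, `Σ(ν-λ) = j`).
Equivalently, `a_{λ+δ} · e_j = Σ_ν a_{ν+δ}`. -/
theorem stmt12 (n j : ℕ) (hj1 : 1 ≤ j) (hj2 : j ≤ n - 1) (l : Fin n → ℕ) (hl : Antitone l) :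
    alternant n (fun t => l t + staircase n t) * MvPolynomial.esymm (Fin n) ℤ j =
      ∑ ν ∈ (Fintype.piFinset fun t : Fin n => Finset.range (l t + 2)).filter
          (fun ν => (∀ t t' : Fin n, t ≤ t' → ν t' ≤ ν t) ∧
            (∀ t, l t ≤ ν t ∧ ν t ≤ l t + 1) ∧ (∑ t, (ν t - l t)) = j),
        alternant n fun t => ν t + staircase n t :=
  stmt12_general n j l hl
end
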